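/- Let Z be a standard normal random variable and E₀, E₁ independent random variables with the exponential distribution of rate 1, with (Z, E₀, E₁) mutually independent, and let α₀, α > 0 with α₀ ≠ α. Then for every z ∈ ℝ, P(Z + α₀·E₀ + α·E₁ ≤ z) = Φ(z) − [α₀ exp(0.5/α₀² − z/α₀)Φ(z − 1/α₀) − α exp(0.5/α² − z/α)Φ(z − 1/α)] / (α₀ − α). -/

import Mathlib

open MeasureTheory ProbabilityTheory Filter Set

/-- The standard normal cumulative distribution function `Φ`. -/
noncomputable def stdNormalCDF (x : ℝ) : ℝ :=
  ∫ t in Set.Iic x, Real.exp (-t ^ 2 / 2) / Real.sqrt (2 * Real.pi)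

/-- The exponential distribution of rate 1 on `ℝ`: density `e^{-x}` on `[0, ∞)`, `0` elsewhere. -/
noncomputable def expMeasure1 : Measure ℝ :=
  volume.withDensity fun x => ENNReal.ofReal (if 0 ≤ x then Real.exp (-x) else 0)

/-!
Conditioning on `Z`, the probability is `E[H(z - Z)]`, where `H` is the distribution function
of `α₀ E₀ + α E₁`. Conditioning on `E₀` in the same way gives the hypoexponential law
`H(s) = 1 - (α₀ e^{-s/α₀} - α e^{-s/α}) / (α₀ - α)` for `s ≥ 0`. Against the standard Gaussian
density `φ`, each exponential term is a shifted Gaussian,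
`φ(x) e^{-(z-x)/β} = e^{1/(2β²) - z/β} φ(x - 1/β)`, whence the terms `Φ(z - 1/β)`.
-/

open Real

lemma measureReal_add_le_eq_integral {Ω : Type*} [MeasurableSpace Ω] {P : Measure Ω}
    [IsFiniteMeasure P] {X Y : Ω → ℝ} (hX : Measurable X) (hY : Measurable Y)
    (hXY : IndepFun X Y P) (z : ℝ) :
    P.real {ω | X ω + Y ω ≤ z} = ∫ x, P.real {ω | Y ω ≤ z - x} ∂(P.map X) := by
  have hS : MeasurableSet {p : ℝ × ℝ | p.1 + p.2 ≤ z} :=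
    measurableSet_le (by fun_prop) measurable_const
  have hfiber (x : ℝ) : Prod.mk x ⁻¹' {p : ℝ × ℝ | p.1 + p.2 ≤ z} = Iic (z - x) := by
    ext y; simp [add_comm x, le_sub_iff_add_le]
  have hlintegral : P {ω | X ω + Y ω ≤ z} = ∫⁻ x, P {ω | Y ω ≤ z - x} ∂(P.map X) := by
    rw [show {ω | X ω + Y ω ≤ z} = (fun ω => (X ω, Y ω)) ⁻¹' {p | p.1 + p.2 ≤ z} from rfl,
      ← Measure.map_apply (hX.prodMk hY) hS,
      (indepFun_iff_map_prod_eq_prod_map_map hX.aemeasurable hY.aemeasurable).1 hXY,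
      Measure.prod_apply hS]
    simp only [hfiber, Measure.map_apply hY measurableSet_Iic]
    rfl
  have hanti : Antitone fun x => P {ω | Y ω ≤ z - x} := fun a b hab =>
    measure_mono fun ω (h : Y ω ≤ z - b) => show Y ω ≤ z - a by linarith
  rw [measureReal_def, hlintegral, ← integral_toReal hanti.measurable.aemeasurable
    (ae_of_all _ fun _ => measure_lt_top _ _)]
  rfl

lemma expMeasure1_eq_expMeasure : expMeasure1 = expMeasure 1 := by
  simp only [expMeasure1, expMeasure, gammaMeasure]
  congr 1
  ext x
  change _ = exponentialPDF 1 x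
  rw [exponentialPDF_eq]
  simp

lemma integral_expMeasure1 (g : ℝ → ℝ) :
    ∫ u, g u ∂expMeasure1 = ∫ u in Ici 0, exp (-u) * g u := by
  rw [expMeasure1, integral_withDensity_eq_integral_toReal_smul
    ((Measurable.ite measurableSet_Ici (by fun_prop) measurable_const).ennreal_ofReal)
    (ae_of_all _ fun _ => ENNReal.ofReal_lt_top), ← integral_indicator measurableSet_Ici]
  congr 1
  ext u
  by_cases hu : 0 ≤ u <;> simp [hu, (exp_pos _).le]

/-- The distribution function of `β E` for `E` exponential of rate 1. -/
noncomputable def expCDF (β r : ℝ) : ℝ :=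
  if 0 ≤ r then 1 - exp (-(r / β)) else 0

lemma measurable_expCDF (β : ℝ) : Measurable (expCDF β) :=
  Measurable.ite measurableSet_Ici (by fun_prop) measurable_const

lemma measureReal_mul_le_eq_expCDF {Ω : Type*} [MeasurableSpace Ω] {P : Measure Ω}
    {E : Ω → ℝ} (hE : Measurable E) (hlaw : P.map E = expMeasure1)
    {β : ℝ} (hβ : 0 < β) (r : ℝ) :
    P.real {ω | β * E ω ≤ r} = expCDF β r := by
  have : IsProbabilityMeasure (expMeasure 1) := isProbabilityMeasure_expMeasure one_pos
  have hset : {ω | β * E ω ≤ r} = E ⁻¹' Iic (r / β) := by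
    ext ω; simp [le_div_iff₀ hβ, mul_comm]
  rw [hset, ← map_measureReal_apply hE measurableSet_Iic, hlaw, expMeasure1_eq_expMeasure,
    ← cdf_eq_real, cdf_expMeasure_eq one_pos, expCDF, one_mul]
  simp only [le_div_iff₀ hβ, zero_mul]

/-- The distribution function of `α₀ E₀ + α E₁` for independent `E₀, E₁` exponential of
rate 1, when `α₀, α > 0` are distinct. -/
noncomputable def hypoexpCDF (α₀ α s : ℝ) : ℝ :=
  if 0 ≤ s then 1 - (α₀ * exp (-(s / α₀)) - α * exp (-(s / α))) / (α₀ - α) else 0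

lemma integral_exp_neg_mul_one_sub_exp {α₀ α : ℝ} (hα₀ : α₀ ≠ 0) (hα : α ≠ 0) (hne : α₀ ≠ α)
    (s : ℝ) :
    ∫ u in (0)..(s / α₀), exp (-u) * (1 - exp (-((s - α₀ * u) / α))) =
      1 - (α₀ * exp (-(s / α₀)) - α * exp (-(s / α))) / (α₀ - α) := by
  have hd : α₀ - α ≠ 0 := sub_ne_zero.2 hne
  set F : ℝ → ℝ := fun u => -exp (-u) - α / (α₀ - α) * exp (-((s - α₀ * u) / α) - u)
  have hF (u : ℝ) : HasDerivAt F (exp (-u) * (1 - exp (-((s - α₀ * u) / α)))) u := by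
    have h := ((hasDerivAt_neg u).exp.neg).sub
      ((((((hasDerivAt_id u).const_mul α₀).const_sub s).div_const α).neg.sub
        (hasDerivAt_id u)).exp.const_mul (α / (α₀ - α)))
    refine h.congr_deriv ?_
    simp only [Pi.neg_apply, Pi.sub_apply, id]
    rw [sub_eq_add_neg _ u, exp_add]
    field_simp
  rw [intervalIntegral.integral_eq_sub_of_hasDerivAt (fun u _ => hF u)
    (by apply Continuous.intervalIntegrable; fun_prop)]
  simp only [F]
  rw [show -((s - α₀ * (s / α₀)) / α) - s / α₀ = -(s / α₀) by field_simp; ring]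
  simp only [neg_zero, exp_zero, mul_zero, sub_zero]
  field_simp
  ring

lemma integral_expCDF_sub_mul_expMeasure1 {α₀ α : ℝ} (hα₀ : 0 < α₀) (hα : α ≠ 0) (hne : α₀ ≠ α)
    (s : ℝ) :
    ∫ u, expCDF α (s - α₀ * u) ∂expMeasure1 = hypoexpCDF α₀ α s := by
  have hle (u : ℝ) : 0 ≤ s - α₀ * u ↔ u ≤ s / α₀ := by
    rw [sub_nonneg, le_div_iff₀ hα₀, mul_comm]
  rw [integral_expMeasure1, hypoexpCDF]
  split_ifs with hs
  · rw [← integral_exp_neg_mul_one_sub_exp hα₀.ne' hα hne s,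
      intervalIntegral.integral_of_le (div_nonneg hs hα₀.le), ← integral_Icc_eq_integral_Ioc,
      setIntegral_eq_of_subset_of_forall_sdiff_eq_zero measurableSet_Ici Icc_subset_Ici_self]
    · refine setIntegral_congr_fun measurableSet_Icc fun u hu => ?_
      simp only [expCDF, if_pos ((hle u).2 hu.2)]
    · rintro u ⟨hu₀, hu⟩
      simp only [expCDF, if_neg (mt (hle u).1 fun h => hu ⟨hu₀, h⟩), mul_zero]
  · refine setIntegral_eq_zero_of_forall_eq_zero fun u (hu : 0 ≤ u) => ?_
    have : ¬ 0 ≤ s - α₀ * u := by nlinarith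
    simp only [expCDF, if_neg this, mul_zero]

lemma measureReal_add_le_eq_hypoexpCDF {Ω : Type*} [MeasurableSpace Ω] {P : Measure Ω}
    [IsFiniteMeasure P] {E₀ E₁ : Ω → ℝ} (hE₀ : Measurable E₀) (hE₁ : Measurable E₁)
    (hlaw₀ : P.map E₀ = expMeasure1) (hlaw₁ : P.map E₁ = expMeasure1) (hindep : IndepFun E₀ E₁ P)
    {α₀ α : ℝ} (hα₀ : 0 < α₀) (hα : 0 < α) (hne : α₀ ≠ α) (s : ℝ) :
    P.real {ω | α₀ * E₀ ω + α * E₁ ω ≤ s} = hypoexpCDF α₀ α s := by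
  rw [measureReal_add_le_eq_integral (hE₀.const_mul α₀) (hE₁.const_mul α)
    (hindep.comp (measurable_const_mul α₀) (measurable_const_mul α))]
  simp_rw [measureReal_mul_le_eq_expCDF hE₁ hlaw₁ hα]
  rw [← Function.comp_def (α₀ * ·), ← Measure.map_map (measurable_const_mul α₀) hE₀, hlaw₀,
    integral_map (f := fun x => expCDF α (s - x)) (measurable_const_mul α₀).aemeasurable
      ((measurable_expCDF α).comp (measurable_const_sub s)).aestronglyMeasurable]
  exact integral_expCDF_sub_mul_expMeasure1 hα₀ hα.ne' hne s

lemma gaussianReal_real_apply (μ : ℝ) {v : NNReal} (hv : v ≠ 0) (s : Set ℝ) :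
    (gaussianReal μ v).real s = ∫ x in s, gaussianPDFReal μ v x := by
  rw [measureReal_def, gaussianReal_apply_eq_integral μ hv,
    ENNReal.toReal_ofReal (integral_nonneg fun x => gaussianPDFReal_nonneg μ v x)]

lemma setIntegral_Iic_gaussianPDFReal (μ t : ℝ) :
    ∫ x in Iic t, gaussianPDFReal μ 1 x = stdNormalCDF (t - μ) := by
  have hΦ : stdNormalCDF (t - μ) = ∫ x in Iic (t - μ), gaussianPDFReal 0 1 x := by
    simp [stdNormalCDF, gaussianPDFReal, div_eq_inv_mul]
  rw [hΦ, ← gaussianReal_real_apply _ one_ne_zero, ← gaussianReal_real_apply _ one_ne_zero,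
    ← zero_add μ, ← gaussianReal_map_add_const μ,
    map_measureReal_apply (measurable_add_const μ) measurableSet_Iic]
  congr 1
  ext x
  simp [le_sub_iff_add_le]

lemma gaussianPDFReal_mul_exp_neg_sub_div (β t x : ℝ) :
    gaussianPDFReal 0 1 x * exp (-((t - x) / β)) =
      exp (0.5 / β ^ 2 - t / β) * gaussianPDFReal (1 / β) 1 x := by
  simp only [gaussianPDFReal, NNReal.coe_one, mul_one, sub_zero]
  rw [mul_comm (exp _), mul_assoc, ← exp_add, mul_assoc, ← exp_add]
  congr 2
  ring

lemma integrable_gaussianPDFReal_mul_exp_neg_sub_div (β t : ℝ) :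
    Integrable fun x => gaussianPDFReal 0 1 x * exp (-((t - x) / β)) := by
  simp only [gaussianPDFReal_mul_exp_neg_sub_div]
  exact (integrable_gaussianPDFReal _ _).const_mul _

lemma setIntegral_Iic_gaussianPDFReal_mul_exp_neg_sub_div (β t : ℝ) :
    ∫ x in Iic t, gaussianPDFReal 0 1 x * exp (-((t - x) / β)) =
      exp (0.5 / β ^ 2 - t / β) * stdNormalCDF (t - 1 / β) := by
  simp only [gaussianPDFReal_mul_exp_neg_sub_div, integral_const_mul,
    setIntegral_Iic_gaussianPDFReal]

lemma integral_hypoexpCDF_sub_gaussianReal (α₀ α z : ℝ) :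
    ∫ x, hypoexpCDF α₀ α (z - x) ∂gaussianReal 0 1 =
      stdNormalCDF z -
        (α₀ * exp (0.5 / α₀ ^ 2 - z / α₀) * stdNormalCDF (z - 1 / α₀) -
          α * exp (0.5 / α ^ 2 - z / α) * stdNormalCDF (z - 1 / α)) / (α₀ - α) := by
  set e : ℝ → ℝ → ℝ := fun β x => gaussianPDFReal 0 1 x * exp (-((z - x) / β))
  have hintegrand (x : ℝ) : gaussianPDFReal 0 1 x • hypoexpCDF α₀ α (z - x) =
      (Iic z).indicator
        (fun x => gaussianPDFReal 0 1 x - (α₀ * e α₀ x - α * e α x) / (α₀ - α)) x := by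
    by_cases hx : x ≤ z
    · simp only [hypoexpCDF, sub_nonneg, if_pos hx, indicator_of_mem (mem_Iic.2 hx), e,
        smul_eq_mul]
      ring
    · simp [hypoexpCDF, hx]
  have he (β : ℝ) : IntegrableOn (e β) (Iic z) :=
    (integrable_gaussianPDFReal_mul_exp_neg_sub_div β z).integrableOn
  have hα₀e : IntegrableOn (fun x => α₀ * e α₀ x) (Iic z) := (he α₀).const_mul α₀
  have hαe : IntegrableOn (fun x => α * e α x) (Iic z) := (he α).const_mul α
  have hdiff : IntegrableOn (fun x => (α₀ * e α₀ x - α * e α x) / (α₀ - α)) (Iic z) :=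
    (hα₀e.sub hαe).div_const _
  rw [integral_gaussianReal_eq_integral_smul one_ne_zero]
  simp only [hintegrand, integral_indicator measurableSet_Iic]
  rw [integral_sub (integrable_gaussianPDFReal 0 1).integrableOn hdiff,
    integral_div, integral_sub hα₀e hαe,
    integral_const_mul, integral_const_mul, setIntegral_Iic_gaussianPDFReal, sub_zero]
  simp only [e, setIntegral_Iic_gaussianPDFReal_mul_exp_neg_sub_div, mul_assoc]

theorem cdf_normal_plus_two_scaled_exponentials
    {Ω : Type*} [MeasureSpace Ω] [IsProbabilityMeasure (ℙ : Measure Ω)]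
    (Z E₀ E₁ : Ω → ℝ) (hZ : Measurable Z) (hE₀ : Measurable E₀) (hE₁ : Measurable E₁)
    (hlawZ : Measure.map Z ℙ = gaussianReal 0 1)
    (hlawE₀ : Measure.map E₀ ℙ = expMeasure1)
    (hlawE₁ : Measure.map E₁ ℙ = expMeasure1)
    (hindep : iIndepFun ![Z, E₀, E₁] ℙ)
    (α₀ α : ℝ) (hα₀ : 0 < α₀) (hα : 0 < α) (hne : α₀ ≠ α) (z : ℝ) :
    (ℙ {ω | Z ω + α₀ * E₀ ω + α * E₁ ω ≤ z}).toReal =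
      stdNormalCDF z -
        (α₀ * Real.exp (0.5 / α₀ ^ 2 - z / α₀) * stdNormalCDF (z - 1 / α₀) -
          α * Real.exp (0.5 / α ^ 2 - z / α) * stdNormalCDF (z - 1 / α)) / (α₀ - α) := by
  have hmeas (i : Fin 3) : Measurable (![Z, E₀, E₁] i) := by fin_cases i <;> assumption
  have hE₀E₁ : IndepFun E₀ E₁ ℙ := by
    simpa using hindep.indepFun (show (1 : Fin 3) ≠ 2 by decide)
  have hZ_sum : IndepFun Z (fun ω => α₀ * E₀ ω + α * E₁ ω) ℙ :=
    (hindep.indepFun_prodMk hmeas 1 2 0 (by decide) (by decide)).symm.comp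
      (ψ := fun p : ℝ × ℝ => α₀ * p.1 + α * p.2) measurable_id (by fun_prop)
  simp only [← measureReal_def, add_assoc]
  rw [measureReal_add_le_eq_integral hZ (by fun_prop) hZ_sum, hlawZ]
  simp only [measureReal_add_le_eq_hypoexpCDF hE₀ hE₁ hlawE₀ hlawE₁ hE₀E₁ hα₀ hα hne]
  exact integral_hypoexpCDF_sub_gaussianReal α₀ α z
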